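/- Let Γ: ℝ × ℝ → ℝ³ be a smooth family such that for each t the curve Γ(·, t) is parametrized by centroaffine arclength, and suppose Γ satisfies the curve flow Γ_t = Γ'' − (2/3)k₁Γ. Then the curvatures k₁, k₂ satisfy the system (k₁)_t = k₁'' + 2k₂' and (k₂)_t = (2/3)(k₁k₁' − k₁''') − k₂''. In particular (k₁)_t = D(k₁' + 2k₂) is an exact x-derivative. -/

import Mathlib

/-- `det3 u v w` is the determinant of the 3×3 matrix with columns (equivalently, rows)
`u`, `v`, `w` in `ℝ³`. -/
noncomputable def det3 (u v w : Fin 3 → ℝ) : ℝ := Matrix.det (Matrix.of ![u, v, w])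

/-- Partial derivative in the first (space) variable. -/
noncomputable def pdx {E : Type*} [NormedAddCommGroup E] [NormedSpace ℝ E]
    (f : ℝ → ℝ → E) : ℝ → ℝ → E := fun x t => deriv (fun x' => f x' t) x

/-- Partial derivative in the second (time) variable. -/
noncomputable def pdt {E : Type*} [NormedAddCommGroup E] [NormedSpace ℝ E]
    (f : ℝ → ℝ → E) : ℝ → ℝ → E := fun x t => deriv (fun t' => f x t') t

section Helpers

variable {E : Type*} [NormedAddCommGroup E] [NormedSpace ℝ E] {f : ℝ → ℝ → E}

lemma slicex_contDiff (h : ContDiff ℝ (⊤ : ℕ∞) fun p : ℝ × ℝ => f p.1 p.2) (t : ℝ) :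
    ContDiff ℝ (⊤ : ℕ∞) fun x => f x t :=
  h.comp (contDiff_id.prodMk contDiff_const)

lemma slicet_contDiff (h : ContDiff ℝ (⊤ : ℕ∞) fun p : ℝ × ℝ => f p.1 p.2) (x : ℝ) :
    ContDiff ℝ (⊤ : ℕ∞) fun t => f x t :=
  h.comp (contDiff_const.prodMk contDiff_id)

lemma hasDerivAt_slicex (h : ContDiff ℝ (⊤ : ℕ∞) fun p : ℝ × ℝ => f p.1 p.2) (x t : ℝ) :
    HasDerivAt (fun x' => f x' t) (pdx f x t) x :=
  (((slicex_contDiff h t).differentiable (by simp)) x).hasDerivAt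

lemma hasDerivAt_slicet (h : ContDiff ℝ (⊤ : ℕ∞) fun p : ℝ × ℝ => f p.1 p.2) (x t : ℝ) :
    HasDerivAt (fun t' => f x t') (pdt f x t) t :=
  (((slicet_contDiff h x).differentiable (by simp)) t).hasDerivAt

lemma pdx_eq_fderiv (h : ContDiff ℝ (⊤ : ℕ∞) fun p : ℝ × ℝ => f p.1 p.2) (x t : ℝ) :
    pdx f x t = fderiv ℝ (fun p : ℝ × ℝ => f p.1 p.2) (x, t) ((1 : ℝ), (0 : ℝ)) := by
  have h1 : HasFDerivAt (fun p : ℝ × ℝ => f p.1 p.2)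
      (fderiv ℝ (fun p : ℝ × ℝ => f p.1 p.2) (x, t)) (x, t) :=
    ((h.differentiable (by simp)) (x, t)).hasFDerivAt
  have h2 : HasDerivAt (fun x' : ℝ => (x', t)) ((1 : ℝ), (0 : ℝ)) x :=
    (hasDerivAt_id x).prodMk (hasDerivAt_const x t)
  exact (h1.comp_hasDerivAt x h2).deriv

lemma pdt_eq_fderiv (h : ContDiff ℝ (⊤ : ℕ∞) fun p : ℝ × ℝ => f p.1 p.2) (x t : ℝ) :
    pdt f x t = fderiv ℝ (fun p : ℝ × ℝ => f p.1 p.2) (x, t) ((0 : ℝ), (1 : ℝ)) := by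
  have h1 : HasFDerivAt (fun p : ℝ × ℝ => f p.1 p.2)
      (fderiv ℝ (fun p : ℝ × ℝ => f p.1 p.2) (x, t)) (x, t) :=
    ((h.differentiable (by simp)) (x, t)).hasFDerivAt
  have h2 : HasDerivAt (fun t' : ℝ => (x, t')) ((0 : ℝ), (1 : ℝ)) t :=
    (hasDerivAt_const t x).prodMk (hasDerivAt_id t)
  exact (h1.comp_hasDerivAt t h2).deriv

lemma sm_pdx (h : ContDiff ℝ (⊤ : ℕ∞) fun p : ℝ × ℝ => f p.1 p.2) :
    ContDiff ℝ (⊤ : ℕ∞) fun p : ℝ × ℝ => pdx f p.1 p.2 := by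
  have : (fun p : ℝ × ℝ => pdx f p.1 p.2)
      = fun p => fderiv ℝ (fun q : ℝ × ℝ => f q.1 q.2) p ((1 : ℝ), (0 : ℝ)) := by
    funext p; exact pdx_eq_fderiv h p.1 p.2
  rw [this]
  exact (ContinuousLinearMap.apply ℝ E ((1 : ℝ), (0 : ℝ))).contDiff.comp (h.fderiv_right (by simp))

/-- Schwarz symmetry of second partials for smooth `f`. -/
lemma pdt_pdx_comm (h : ContDiff ℝ (⊤ : ℕ∞) fun p : ℝ × ℝ => f p.1 p.2) (x t : ℝ) :
    pdt (pdx f) x t = pdx (pdt f) x t := by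
  set F := fun p : ℝ × ℝ => f p.1 p.2 with hF
  have hdF : Differentiable ℝ (fderiv ℝ F) :=
    (h.fderiv_right (m := (⊤ : ℕ∞)) (by simp)).differentiable (by simp)
  have hsnd : ∀ v w : ℝ × ℝ,
      fderiv ℝ (fderiv ℝ F) (x, t) v w = fderiv ℝ (fderiv ℝ F) (x, t) w v :=
    (h.contDiffAt).isSymmSndFDerivAt (by rw [minSmoothness_of_isRCLikeNormedField]; exact WithTop.coe_le_coe.2 (le_top : (2 : ℕ∞) ≤ ⊤))
  -- derivative of p ↦ fderiv F p v in direction u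
  have hdir : ∀ (v u : ℝ × ℝ) (γ : ℝ → ℝ × ℝ) (y : ℝ), HasDerivAt γ u y →
      HasDerivAt (fun y' => fderiv ℝ F (γ y') v) (fderiv ℝ (fderiv ℝ F) (γ y) u v) y := by
    intro v u γ y hγ
    have h1 : HasFDerivAt (fun p : ℝ × ℝ => fderiv ℝ F p v)
        ((ContinuousLinearMap.apply ℝ E v).comp (fderiv ℝ (fderiv ℝ F) (γ y))) (γ y) :=
      (ContinuousLinearMap.apply ℝ E v).hasFDerivAt.comp (γ y) (hdF (γ y)).hasFDerivAt
    exact h1.comp_hasDerivAt y hγ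
  have e1 : pdt (pdx f) x t = fderiv ℝ (fderiv ℝ F) (x, t) ((0:ℝ), (1:ℝ)) ((1:ℝ), (0:ℝ)) := by
    have hfn : (fun t' => pdx f x t') = fun t' => fderiv ℝ F (x, t') ((1:ℝ), (0:ℝ)) := by
      funext t'; exact pdx_eq_fderiv h x t'
    have hγ : HasDerivAt (fun t' : ℝ => (x, t')) ((0 : ℝ), (1 : ℝ)) t :=
      (hasDerivAt_const t x).prodMk (hasDerivAt_id t)
    have := (hdir ((1:ℝ),(0:ℝ)) ((0:ℝ),(1:ℝ)) (fun t' => (x, t')) t hγ)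
    show deriv (fun t' => pdx f x t') t = _
    rw [hfn]
    exact this.deriv
  have e2 : pdx (pdt f) x t = fderiv ℝ (fderiv ℝ F) (x, t) ((1:ℝ), (0:ℝ)) ((0:ℝ), (1:ℝ)) := by
    have hfn : (fun x' => pdt f x' t) = fun x' => fderiv ℝ F (x', t) ((0:ℝ), (1:ℝ)) := by
      funext x'; exact pdt_eq_fderiv h x' t
    have hγ : HasDerivAt (fun x' : ℝ => (x', t)) ((1 : ℝ), (0 : ℝ)) x :=
      (hasDerivAt_id x).prodMk (hasDerivAt_const x t)
    have := (hdir ((0:ℝ),(1:ℝ)) ((1:ℝ),(0:ℝ)) (fun x' => (x', t)) x hγ)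
    show deriv (fun x' => pdt f x' t) x = _
    rw [hfn]
    exact this.deriv
  rw [e1, e2, hsnd]

end Helpers

section Det3

lemma det3_apply (u v w : Fin 3 → ℝ) :
    det3 u v w = u 0 * v 1 * w 2 - u 0 * v 2 * w 1 - u 1 * v 0 * w 2
      + u 1 * v 2 * w 0 + u 2 * v 0 * w 1 - u 2 * v 1 * w 0 := by
  simp [det3, Matrix.det_fin_three]

lemma cramer3 (a b c v : Fin 3 → ℝ) :
    det3 a b c • v = det3 v b c • a + det3 a v c • b + det3 a b v • c := by
  funext i
  fin_cases i <;>
    · simp only [det3_apply, Pi.smul_apply, Pi.add_apply, smul_eq_mul, Fin.reduceFinMk]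
      ring

lemma HasDerivAt.mul3 {a b c : ℝ → ℝ} {a' b' c' : ℝ} {x : ℝ} (ha : HasDerivAt a a' x)
    (hb : HasDerivAt b b' x) (hc : HasDerivAt c c' x) :
    HasDerivAt (fun y => a y * b y * c y)
      (a' * b x * c x + a x * b' * c x + a x * b x * c') x := by
  have : HasDerivAt (fun y => a y * b y * c y)
      ((a' * b x + a x * b') * c x + a x * b x * c') x := (ha.mul hb).mul hc
  convert this using 1
  ring

lemma hasDerivAt_det3 {u v w : ℝ → Fin 3 → ℝ} {u' v' w' : Fin 3 → ℝ} {x : ℝ}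
    (hu : HasDerivAt u u' x) (hv : HasDerivAt v v' x) (hw : HasDerivAt w w' x) :
    HasDerivAt (fun y => det3 (u y) (v y) (w y))
      (det3 u' (v x) (w x) + det3 (u x) v' (w x) + det3 (u x) (v x) w') x := by
  have hu0 := hasDerivAt_pi.1 hu 0
  have hu1 := hasDerivAt_pi.1 hu 1
  have hu2 := hasDerivAt_pi.1 hu 2
  have hv0 := hasDerivAt_pi.1 hv 0
  have hv1 := hasDerivAt_pi.1 hv 1
  have hv2 := hasDerivAt_pi.1 hv 2
  have hw0 := hasDerivAt_pi.1 hw 0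
  have hw1 := hasDerivAt_pi.1 hw 1
  have hw2 := hasDerivAt_pi.1 hw 2
  have H : HasDerivAt (fun y => u y 0 * v y 1 * w y 2 - u y 0 * v y 2 * w y 1
      - u y 1 * v y 0 * w y 2 + u y 1 * v y 2 * w y 0 + u y 2 * v y 0 * w y 1
      - u y 2 * v y 1 * w y 0) _ x := (((((hu0.mul3 hv1 hw2).sub (hu0.mul3 hv2 hw1)).sub
      (hu1.mul3 hv0 hw2)).add (hu1.mul3 hv2 hw0)).add
      (hu2.mul3 hv0 hw1)).sub (hu2.mul3 hv1 hw0)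
  have hfn : (fun y => det3 (u y) (v y) (w y))
      = fun y => u y 0 * v y 1 * w y 2 - u y 0 * v y 2 * w y 1 - u y 1 * v y 0 * w y 2
        + u y 1 * v y 2 * w y 0 + u y 2 * v y 0 * w y 1 - u y 2 * v y 1 * w y 0 := by
    funext y; exact det3_apply _ _ _
  rw [hfn]
  convert H using 1
  simp only [det3_apply]
  ring

lemma sm_det3 {u v w : ℝ → ℝ → Fin 3 → ℝ}
    (hu : ContDiff ℝ (⊤ : ℕ∞) fun p : ℝ × ℝ => u p.1 p.2)
    (hv : ContDiff ℝ (⊤ : ℕ∞) fun p : ℝ × ℝ => v p.1 p.2)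
    (hw : ContDiff ℝ (⊤ : ℕ∞) fun p : ℝ × ℝ => w p.1 p.2) :
    ContDiff ℝ (⊤ : ℕ∞) fun p : ℝ × ℝ => det3 (u p.1 p.2) (v p.1 p.2) (w p.1 p.2) := by
  have cu : ∀ i, ContDiff ℝ (⊤ : ℕ∞) fun p : ℝ × ℝ => u p.1 p.2 i := fun i => contDiff_pi.1 hu i
  have cv : ∀ i, ContDiff ℝ (⊤ : ℕ∞) fun p : ℝ × ℝ => v p.1 p.2 i := fun i => contDiff_pi.1 hv i
  have cw : ∀ i, ContDiff ℝ (⊤ : ℕ∞) fun p : ℝ × ℝ => w p.1 p.2 i := fun i => contDiff_pi.1 hw i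
  have : (fun p : ℝ × ℝ => det3 (u p.1 p.2) (v p.1 p.2) (w p.1 p.2))
      = fun p => u p.1 p.2 0 * v p.1 p.2 1 * w p.1 p.2 2
        - u p.1 p.2 0 * v p.1 p.2 2 * w p.1 p.2 1
        - u p.1 p.2 1 * v p.1 p.2 0 * w p.1 p.2 2
        + u p.1 p.2 1 * v p.1 p.2 2 * w p.1 p.2 0
        + u p.1 p.2 2 * v p.1 p.2 0 * w p.1 p.2 1
        - u p.1 p.2 2 * v p.1 p.2 1 * w p.1 p.2 0 := by
    funext p; exact det3_apply _ _ _
  rw [this]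
  exact (((((((cu 0).mul (cv 1)).mul (cw 2)).sub (((cu 0).mul (cv 2)).mul (cw 1))).sub
    (((cu 1).mul (cv 0)).mul (cw 2))).add (((cu 1).mul (cv 2)).mul (cw 0))).add
    (((cu 2).mul (cv 0)).mul (cw 1))).sub (((cu 2).mul (cv 1)).mul (cw 0))

end Det3

section MoreHelpers

variable {E : Type*} [NormedAddCommGroup E] [NormedSpace ℝ E]

lemma det3_dup12 (a b : Fin 3 → ℝ) : det3 a a b = 0 := by rw [det3_apply]; ring

lemma det3_dup23 (a b : Fin 3 → ℝ) : det3 a b b = 0 := by rw [det3_apply]; ring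

lemma pdx_eq_of {f : ℝ → ℝ → E} {F : ℝ → E} {d : E} {x t : ℝ}
    (hfn : (fun x' => f x' t) = F) (hF : HasDerivAt F d x) : pdx f x t = d := by
  unfold pdx; rw [hfn]; exact hF.deriv

lemma pdt_eq_of {f : ℝ → ℝ → E} {F : ℝ → E} {d : E} {x t : ℝ}
    (hfn : (fun t' => f x t') = F) (hF : HasDerivAt F d t) : pdt f x t = d := by
  unfold pdt; rw [hfn]; exact hF.deriv

end MoreHelpers

/-- Under the centroaffine curve flow `Γ_t = Γ'' − (2/3)k₁Γ`, the curvatures satisfy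
`(k₁)_t = k₁'' + 2k₂'` and `(k₂)_t = (2/3)(k₁k₁' − k₁''') − k₂''`; in particular
`(k₁)_t = D(k₁' + 2k₂)` is an exact `x`-derivative. -/
theorem boussinesq_flow_curvature_evolution
    (Γ : ℝ → ℝ → Fin 3 → ℝ)
    (hΓ : ContDiff ℝ (⊤ : ℕ∞) (fun p : ℝ × ℝ => Γ p.1 p.2))
    (harc : ∀ x t, det3 (Γ x t) (pdx Γ x t) (pdx (pdx Γ) x t) = 1)
    (p₀ p₁ k₁ k₂ : ℝ → ℝ → ℝ)
    (hp₀ : ∀ x t, p₀ x t = det3 (pdx (pdx (pdx Γ)) x t) (pdx Γ x t) (pdx (pdx Γ) x t))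
    (hp₁ : ∀ x t, p₁ x t = det3 (Γ x t) (pdx (pdx (pdx Γ)) x t) (pdx (pdx Γ) x t))
    (hk₁ : ∀ x t, k₁ x t = p₁ x t)
    (hk₂ : ∀ x t, k₂ x t = p₀ x t - pdx p₁ x t)
    (hflow : ∀ x t, pdt Γ x t = pdx (pdx Γ) x t - ((2/3) * k₁ x t) • Γ x t) :
    (∀ x t, pdt k₁ x t = pdx (pdx k₁) x t + 2 * pdx k₂ x t) ∧
    (∀ x t, pdt k₂ x t
        = (2/3) * (k₁ x t * pdx k₁ x t - pdx (pdx (pdx k₁)) x t) - pdx (pdx k₂) x t) ∧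
    (∀ x t, pdt k₁ x t = pdx (fun x t => pdx k₁ x t + 2 * k₂ x t) x t) := by
  have hk1F : p₁ = k₁ := (funext fun x => funext fun t => hk₁ x t).symm
  subst hk1F
  have hk2F : k₂ = fun x t => p₀ x t - pdx p₁ x t := funext fun x => funext fun t => hk₂ x t
  subst hk2F
  set Γ1 := pdx Γ with hΓ1
  set Γ2 := pdx Γ1 with hΓ2
  set Γ3 := pdx Γ2 with hΓ3
  set Γ4 := pdx Γ3 with hΓ4
  set Γ5 := pdx Γ4 with hΓ5
  -- smoothness
  have sΓ : ContDiff ℝ (⊤ : ℕ∞) (fun p : ℝ × ℝ => Γ p.1 p.2) := hΓ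
  have s1 : ContDiff ℝ (⊤ : ℕ∞) (fun p : ℝ × ℝ => Γ1 p.1 p.2) := sm_pdx sΓ
  have s2 : ContDiff ℝ (⊤ : ℕ∞) (fun p : ℝ × ℝ => Γ2 p.1 p.2) := sm_pdx s1
  have s3 : ContDiff ℝ (⊤ : ℕ∞) (fun p : ℝ × ℝ => Γ3 p.1 p.2) := sm_pdx s2
  have s4 : ContDiff ℝ (⊤ : ℕ∞) (fun p : ℝ × ℝ => Γ4 p.1 p.2) := sm_pdx s3
  have sp0 : ContDiff ℝ (⊤ : ℕ∞) (fun p : ℝ × ℝ => p₀ p.1 p.2) := by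
    have he : (fun p : ℝ × ℝ => p₀ p.1 p.2)
        = fun p : ℝ × ℝ => det3 (Γ3 p.1 p.2) (Γ1 p.1 p.2) (Γ2 p.1 p.2) := by
      funext p; exact hp₀ p.1 p.2
    rw [he]; exact sm_det3 s3 s1 s2
  have sp1 : ContDiff ℝ (⊤ : ℕ∞) (fun p : ℝ × ℝ => p₁ p.1 p.2) := by
    have he : (fun p : ℝ × ℝ => p₁ p.1 p.2)
        = fun p : ℝ × ℝ => det3 (Γ p.1 p.2) (Γ3 p.1 p.2) (Γ2 p.1 p.2) := by
      funext p; exact hp₁ p.1 p.2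
    rw [he]; exact sm_det3 sΓ s3 s2
  have sp0x : ContDiff ℝ (⊤ : ℕ∞) (fun p : ℝ × ℝ => pdx p₀ p.1 p.2) := sm_pdx sp0
  have sp1x : ContDiff ℝ (⊤ : ℕ∞) (fun p : ℝ × ℝ => pdx p₁ p.1 p.2) := sm_pdx sp1
  have sp1xx : ContDiff ℝ (⊤ : ℕ∞) (fun p : ℝ × ℝ => pdx (pdx p₁) p.1 p.2) := sm_pdx sp1x
  -- q013 = 0
  have hq013 : ∀ x t, det3 (Γ x t) (Γ1 x t) (Γ3 x t) = 0 := by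
    intro x t
    have hL := hasDerivAt_det3 (hasDerivAt_slicex sΓ x t) (hasDerivAt_slicex s1 x t)
      (hasDerivAt_slicex s2 x t)
    have hC : HasDerivAt (fun y => det3 (Γ y t) (Γ1 y t) (Γ2 y t)) 0 x := by
      have he : (fun y => det3 (Γ y t) (Γ1 y t) (Γ2 y t)) = fun _ => (1 : ℝ) :=
        funext fun y => harc y t
      rw [he]; exact hasDerivAt_const x 1
    have hu := hL.unique hC
    simp only [← hΓ1, ← hΓ2, ← hΓ3] at hu
    simpa [det3_dup12, det3_dup23] using hu
  -- frame relation
  have frame : ∀ x t, Γ3 x t = p₀ x t • Γ x t + p₁ x t • Γ1 x t := by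
    intro x t
    have hc := cramer3 (Γ x t) (Γ1 x t) (Γ2 x t) (Γ3 x t)
    rw [harc x t, hq013 x t, ← hp₀ x t, ← hp₁ x t] at hc
    simpa using hc
  -- fourth derivative in frame
  have hG4 : ∀ x t, Γ4 x t = pdx p₀ x t • Γ x t + (p₀ x t + pdx p₁ x t) • Γ1 x t
      + p₁ x t • Γ2 x t := by
    intro x t
    have hfn : (fun x' => Γ3 x' t)
        = fun x' => p₀ x' t • Γ x' t + p₁ x' t • Γ1 x' t := funext fun x' => frame x' t
    have hD := ((hasDerivAt_slicex sp0 x t).smul (hasDerivAt_slicex sΓ x t)).add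
      ((hasDerivAt_slicex sp1 x t).smul (hasDerivAt_slicex s1 x t))
    have e := pdx_eq_of (f := Γ3) hfn hD
    rw [hΓ4, e]
    simp only [← hΓ1, ← hΓ2]
    funext i
    simp only [Pi.add_apply, Pi.sub_apply, Pi.smul_apply, smul_eq_mul]
    ring
  -- fifth derivative in frame
  have hG5 : ∀ x t, Γ5 x t = (pdx (pdx p₀) x t + p₁ x t * p₀ x t) • Γ x t
      + (2 * pdx p₀ x t + pdx (pdx p₁) x t + p₁ x t * p₁ x t) • Γ1 x t
      + (p₀ x t + 2 * pdx p₁ x t) • Γ2 x t := by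
    intro x t
    have hfn : (fun x' => Γ4 x' t)
        = fun x' => pdx p₀ x' t • Γ x' t + (p₀ x' t + pdx p₁ x' t) • Γ1 x' t
          + p₁ x' t • Γ2 x' t := funext fun x' => hG4 x' t
    have hD := (((hasDerivAt_slicex sp0x x t).smul (hasDerivAt_slicex sΓ x t)).add
      (((hasDerivAt_slicex sp0 x t).add (hasDerivAt_slicex sp1x x t)).smul
        (hasDerivAt_slicex s1 x t))).add
      ((hasDerivAt_slicex sp1 x t).smul (hasDerivAt_slicex s2 x t))
    have e := pdx_eq_of (f := Γ4) hfn hD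
    rw [hΓ5, e]
    simp only [← hΓ1, ← hΓ2, ← hΓ3]
    rw [frame x t]
    funext i
    simp only [Pi.add_apply, Pi.sub_apply, Pi.smul_apply, smul_eq_mul]
    ring
  -- time derivatives of the frame
  have hT1 : ∀ x t, pdt Γ1 x t = Γ3 x t - ((2/3) * pdx p₁ x t) • Γ x t
      - ((2/3) * p₁ x t) • Γ1 x t := by
    intro x t
    have hsw : pdt Γ1 x t = pdx (pdt Γ) x t := by rw [hΓ1]; exact pdt_pdx_comm sΓ x t
    have hfn : (fun x' => pdt Γ x' t)
        = fun x' => Γ2 x' t - (2/3 * p₁ x' t) • Γ x' t := funext fun x' => hflow x' t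
    have hD := (hasDerivAt_slicex s2 x t).sub
      (((hasDerivAt_slicex sp1 x t).const_mul (2/3 : ℝ)).smul (hasDerivAt_slicex sΓ x t))
    have e := pdx_eq_of (f := pdt Γ) hfn hD
    rw [hsw, e]
    simp only [← hΓ1, ← hΓ2, ← hΓ3]
    funext i
    simp only [Pi.add_apply, Pi.sub_apply, Pi.smul_apply, smul_eq_mul]
    ring
  have hT2 : ∀ x t, pdt Γ2 x t = Γ4 x t - ((2/3) * pdx (pdx p₁) x t) • Γ x t
      - ((4/3) * pdx p₁ x t) • Γ1 x t - ((2/3) * p₁ x t) • Γ2 x t := by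
    intro x t
    have hsw : pdt Γ2 x t = pdx (pdt Γ1) x t := by rw [hΓ2]; exact pdt_pdx_comm s1 x t
    have hfn : (fun x' => pdt Γ1 x' t)
        = fun x' => Γ3 x' t - ((2/3) * pdx p₁ x' t) • Γ x' t - ((2/3) * p₁ x' t) • Γ1 x' t :=
      funext fun x' => hT1 x' t
    have hD := (((hasDerivAt_slicex s3 x t).sub
      (((hasDerivAt_slicex sp1x x t).const_mul (2/3 : ℝ)).smul (hasDerivAt_slicex sΓ x t))).sub
      (((hasDerivAt_slicex sp1 x t).const_mul (2/3 : ℝ)).smul (hasDerivAt_slicex s1 x t)))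
    have e := pdx_eq_of (f := pdt Γ1) hfn hD
    rw [hsw, e]
    simp only [← hΓ1, ← hΓ2, ← hΓ4]
    funext i
    simp only [Pi.add_apply, Pi.sub_apply, Pi.smul_apply, smul_eq_mul]
    ring
  have hT3 : ∀ x t, pdt Γ3 x t = Γ5 x t - ((2/3) * pdx (pdx (pdx p₁)) x t) • Γ x t
      - (2 * pdx (pdx p₁) x t) • Γ1 x t - (2 * pdx p₁ x t) • Γ2 x t
      - ((2/3) * p₁ x t) • Γ3 x t := by
    intro x t
    have hsw : pdt Γ3 x t = pdx (pdt Γ2) x t := by rw [hΓ3]; exact pdt_pdx_comm s2 x t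
    have hfn : (fun x' => pdt Γ2 x' t)
        = fun x' => Γ4 x' t - ((2/3) * pdx (pdx p₁) x' t) • Γ x' t
          - ((4/3) * pdx p₁ x' t) • Γ1 x' t - ((2/3) * p₁ x' t) • Γ2 x' t :=
      funext fun x' => hT2 x' t
    have hD := ((((hasDerivAt_slicex s4 x t).sub
      (((hasDerivAt_slicex sp1xx x t).const_mul (2/3 : ℝ)).smul (hasDerivAt_slicex sΓ x t))).sub
      (((hasDerivAt_slicex sp1x x t).const_mul (4/3 : ℝ)).smul (hasDerivAt_slicex s1 x t))).sub
      (((hasDerivAt_slicex sp1 x t).const_mul (2/3 : ℝ)).smul (hasDerivAt_slicex s2 x t)))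
    have e := pdx_eq_of (f := pdt Γ2) hfn hD
    rw [hsw, e]
    simp only [← hΓ1, ← hΓ2, ← hΓ3, ← hΓ5]
    funext i
    simp only [Pi.add_apply, Pi.sub_apply, Pi.smul_apply, smul_eq_mul]
    ring
  -- evolution of p₁
  have hP1t : ∀ x t, pdt p₁ x t = 2 * pdx p₀ x t - pdx (pdx p₁) x t := by
    intro x t
    have hfn : (fun t' => p₁ x t')
        = fun t' => det3 (Γ x t') (Γ3 x t') (Γ2 x t') := funext fun t' => hp₁ x t'
    have hD := hasDerivAt_det3 (hasDerivAt_slicet sΓ x t) (hasDerivAt_slicet s3 x t)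
      (hasDerivAt_slicet s2 x t)
    have e := pdt_eq_of (f := p₁) hfn hD
    rw [hflow x t, hT3 x t, hT2 x t, hG5 x t, hG4 x t, frame x t] at e
    rw [e]
    have hh := harc x t
    rw [det3_apply] at hh
    simp only [det3_apply, Pi.add_apply, Pi.sub_apply, Pi.smul_apply, smul_eq_mul]
    linear_combination (2 * pdx p₀ x t - pdx (pdx p₁) x t) * hh
  -- evolution of p₀
  have hP0t : ∀ x t, pdt p₀ x t = pdx (pdx p₀) x t - (2/3) * pdx (pdx (pdx p₁)) x t
      + (2/3) * (p₁ x t * pdx p₁ x t) := by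
    intro x t
    have hfn : (fun t' => p₀ x t')
        = fun t' => det3 (Γ3 x t') (Γ1 x t') (Γ2 x t') := funext fun t' => hp₀ x t'
    have hD := hasDerivAt_det3 (hasDerivAt_slicet s3 x t) (hasDerivAt_slicet s1 x t)
      (hasDerivAt_slicet s2 x t)
    have e := pdt_eq_of (f := p₀) hfn hD
    rw [hT3 x t, hT2 x t, hT1 x t, hG5 x t, hG4 x t, frame x t] at e
    rw [e]
    have hh := harc x t
    rw [det3_apply] at hh
    simp only [det3_apply, Pi.add_apply, Pi.sub_apply, Pi.smul_apply, smul_eq_mul]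
    linear_combination (pdx (pdx p₀) x t - (2/3) * pdx (pdx (pdx p₁)) x t
      + (2/3) * (p₁ x t * pdx p₁ x t)) * hh
  -- x-derivatives of k₂
  have hK2x : ∀ x t, pdx (fun x t => p₀ x t - pdx p₁ x t) x t
      = pdx p₀ x t - pdx (pdx p₁) x t := by
    intro x t
    exact pdx_eq_of (f := fun x t => p₀ x t - pdx p₁ x t) rfl
      ((hasDerivAt_slicex sp0 x t).sub (hasDerivAt_slicex sp1x x t))
  have hK2xx : ∀ x t, pdx (pdx (fun x t => p₀ x t - pdx p₁ x t)) x t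
      = pdx (pdx p₀) x t - pdx (pdx (pdx p₁)) x t := by
    intro x t
    have hfn : (fun x' => pdx (fun x t => p₀ x t - pdx p₁ x t) x' t)
        = fun x' => pdx p₀ x' t - pdx (pdx p₁) x' t := funext fun x' => hK2x x' t
    exact pdx_eq_of (f := pdx (fun x t => p₀ x t - pdx p₁ x t)) hfn
      ((hasDerivAt_slicex sp0x x t).sub (hasDerivAt_slicex sp1xx x t))
  have hP1tx : ∀ x t, pdx (pdt p₁) x t
      = 2 * pdx (pdx p₀) x t - pdx (pdx (pdx p₁)) x t := by
    intro x t
    have hfn : (fun x' => pdt p₁ x' t)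
        = fun x' => 2 * pdx p₀ x' t - pdx (pdx p₁) x' t := funext fun x' => hP1t x' t
    exact pdx_eq_of (f := pdt p₁) hfn
      (((hasDerivAt_slicex sp0x x t).const_mul (2 : ℝ)).sub (hasDerivAt_slicex sp1xx x t))
  refine ⟨?_, ?_, ?_⟩
  · intro x t
    rw [hP1t x t, hK2x x t]
    ring
  · intro x t
    have hK2t : pdt (fun x t => p₀ x t - pdx p₁ x t) x t
        = pdt p₀ x t - pdt (pdx p₁) x t :=
      pdt_eq_of (f := fun x t => p₀ x t - pdx p₁ x t) rfl
        ((hasDerivAt_slicet sp0 x t).sub (hasDerivAt_slicet sp1x x t))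
    have hcomm : pdt (pdx p₁) x t = pdx (pdt p₁) x t := pdt_pdx_comm sp1 x t
    rw [hK2t, hcomm, hP1tx x t, hP0t x t, hK2xx x t]
    ring
  · intro x t
    have hR : pdx (fun x t => pdx p₁ x t + 2 * (p₀ x t - pdx p₁ x t)) x t
        = pdx (pdx p₁) x t + 2 * (pdx p₀ x t - pdx (pdx p₁) x t) :=
      pdx_eq_of (f := fun x t => pdx p₁ x t + 2 * (p₀ x t - pdx p₁ x t)) rfl
        ((hasDerivAt_slicex sp1x x t).add
          (((hasDerivAt_slicex sp0 x t).sub (hasDerivAt_slicex sp1x x t)).const_mul (2 : ℝ)))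
    rw [hR, hP1t x t]
    ring
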